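/- arXiv:1201.5316 — 3 statements merged into one kernel-verified Lean document; each statement's English description precedes it below -/
import Mathlib

section
/- For every polynomial P ∈ ℚ⟨x,y⟩, one has s(xP) = x·s(P) − s(P)·x = [x, s(P)]. -/
/- Common setup: the ring ℚ⟨x,y⟩ of polynomials in two non-commuting variables,
   modelled as the monoid algebra of the free monoid on two letters
   (letter 0 ↦ x, letter 1 ↦ y). -/

abbrev Word := FreeMonoid (Fin 2)
abbrev R2 := MonoidAlgebra ℚ Word

attribute [local instance 100] LieRing.ofAssociativeRing

noncomputable section
namespace DblSh

/-- The variable x. -/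
def X : R2 := MonoidAlgebra.of ℚ Word (FreeMonoid.of 0)
/-- The variable y. -/
def Y : R2 := MonoidAlgebra.of ℚ Word (FreeMonoid.of 1)
/-- The monomial associated to a word. -/
def mono (w : Word) : R2 := MonoidAlgebra.single w 1
/-- (f|w), the coefficient of the monomial w in f. -/
def coeff (f : R2) (w : Word) : ℚ := f.coeff w
/-- The pairing (f|g) = Σ_w (g|w)·(f|w), i.e. (f|·) extended linearly. -/
def pairing (f g : R2) : ℚ := Finsupp.sum g.coeff (fun w c => c * f.coeff w)
/-- Degree of a word. -/
def wlen (w : Word) : ℕ := (FreeMonoid.toList w).length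
/-- Depth of a word: the number of letters y. -/
def countY (w : Word) : ℕ := (FreeMonoid.toList w).count 1

/-- Lie[x,y]: the Lie subalgebra of ℚ⟨x,y⟩ generated by x and y (the free Lie algebra). -/
def LieP : LieSubalgebra ℚ R2 := LieSubalgebra.lieSpan ℚ R2 {X, Y}
/-- f is homogeneous of degree n. -/
def IsHomog (n : ℕ) (f : R2) : Prop := ∀ w ∈ f.coeff.support, wlen w = n
/-- f ∈ Lie_n[x,y]. -/
def InLieN (n : ℕ) (f : R2) : Prop := f ∈ LieP ∧ IsHomog n f

/-- `anti` on words: reversal. -/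
def antiW (w : Word) : Word := FreeMonoid.ofList (FreeMonoid.toList w).reverse
/-- The linear operator `anti` reversing each monomial. -/
def anti (f : R2) : R2 := MonoidAlgebra.mapDomain antiW f
/-- f (homogeneous of degree m) is antipalindromic: f = (−1)^m · anti f. -/
def Antipal (m : ℕ) (f : R2) : Prop := f = ((-1 : ℚ))^m • anti f

/-- `push` on a word containing at least one y:
    push(x^{a₀}y⋯y x^{a_{r-1}} y x^{a_r}) = x^{a_r} y x^{a₀} y ⋯ y x^{a_{r-1}};
    words with no y are left fixed. -/
def pushW (w : Word) : Word :=
  let l := (FreeMonoid.toList w).reverse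
  let t := l.takeWhile (fun c => c = 0)
  match l.dropWhile (fun c => c = 0) with
  | [] => w
  | _ :: rest => FreeMonoid.ofList (t.reverse ++ (1 :: rest.reverse))
/-- `push` extended linearly to polynomials. -/
def pushP (f : R2) : R2 := MonoidAlgebra.mapDomain pushW f
/-- The list Push(w) of the r+1 iterates of push on w (r = depth of w). -/
def PushList (w : Word) : List Word := (List.range (countY w + 1)).map (fun k => pushW^[k] w)
/-- The word y^m. -/
def yPow (m : ℕ) : Word := FreeMonoid.ofList (List.replicate m 1)
/-- f (homogeneous of degree m) is push-constant for the constant A. -/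
def PushConst (m : ℕ) (f : R2) (A : ℚ) : Prop :=
  coeff f (yPow m) = 0 ∧
  ∀ w : Word, wlen w = m → w ≠ yPow m → ((PushList w).map (fun v => coeff f v)).sum = A

/-- ∂_x on a word (Leibniz expansion). -/
def dxW (w : Word) : R2 :=
  ∑ i ∈ Finset.range (wlen w),
    if (FreeMonoid.toList w).getD i 1 = 0
    then mono (FreeMonoid.ofList ((FreeMonoid.toList w).eraseIdx i)) else 0
/-- The derivation ∂_x of ℚ⟨x,y⟩, with ∂_x(x) = 1 and ∂_x(y) = 0. -/
def dx (f : R2) : R2 := Finsupp.sum f.coeff (fun w c => c • dxW w)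
/-- s(h) = Σ_{i≥0} ((−1)^i/i!)·∂_x^i(h)·y·x^i. -/
def sMap (h : R2) : R2 := ∑ᶠ i : ℕ, ((-1 : ℚ)^i / (i.factorial : ℚ)) • (dx^[i] h * Y * X ^ i)
/-- s'(h) = Σ_{i≥0} ((−1)^i/i!)·x^i·y·∂_x^i(h). -/
def s'Map (h : R2) : R2 := ∑ᶠ i : ℕ, ((-1 : ℚ)^i / (i.factorial : ℚ)) • (X ^ i * Y * dx^[i] h)

/-- The algebra endomorphism of ℚ⟨x,y⟩ with x ↦ a, y ↦ b. -/
def subst (a b : R2) : R2 →ₐ[ℚ] R2 :=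
  MonoidAlgebra.lift ℚ R2 Word (FreeMonoid.lift (fun i : Fin 2 => if i = 0 then a else b))

/-- The value on a word of the derivation of ℚ⟨x,y⟩ with x ↦ a, y ↦ b (Leibniz expansion). -/
def derW (a b : R2) (w : Word) : R2 :=
  ∑ i ∈ Finset.range (wlen w),
    mono (FreeMonoid.ofList ((FreeMonoid.toList w).take i)) *
      (if (FreeMonoid.toList w).getD i 1 = 0 then a else b) *
      mono (FreeMonoid.ofList ((FreeMonoid.toList w).drop (i+1)))
/-- The derivation of ℚ⟨x,y⟩ with x ↦ a, y ↦ b. -/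
def derP (a b : R2) (f : R2) : R2 := Finsupp.sum f.coeff (fun w c => c • derW a b w)
/-- The derivation D_{F,G} with x ↦ [x,G], y ↦ [y,F]. -/
def DFG (F G : R2) : R2 → R2 := derP (X * G - G * X) (Y * F - F * Y)

/-- The subspace of ℚ⟨x,y⟩ spanned by all commutators ab − ba. -/
def trIdeal : Submodule ℚ R2 := Submodule.span ℚ {c : R2 | ∃ a b : R2, c = a * b - b * a}
/-- TR, the trace space. -/
abbrev TRsp := R2 ⧸ trIdeal
/-- The trace map tr : ℚ⟨x,y⟩ → TR. -/
def trQ : R2 →ₗ[ℚ] TRsp := trIdeal.mkQ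

/-- Generators of krv2: the special derivations D_{F,G}, F,G ∈ Lie_n[x,y] (n ≥ 1),
    satisfying the trace condition tr(F_y·y + G_x·x) = A·tr((x+y)^n − x^n − y^n). -/
def krvGens : Set (R2 → R2) :=
  {D | ∃ n : ℕ, 1 ≤ n ∧ ∃ F G : R2, InLieN n F ∧ InLieN n G ∧ D = DFG F G ∧
    (X * G - G * X) + (Y * F - F * Y) = 0 ∧
    ∃ Fx Fy Gx Gy : R2, F = Fx * X + Fy * Y ∧ G = Gx * X + Gy * Y ∧
      ∃ A : ℚ, trQ (Fy * Y + Gx * X) = A • trQ ((X + Y)^n - X^n - Y^n)}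
/-- The Kashiwara–Vergne Lie algebra krv2, as a space of operators. -/
def krv2 : Submodule ℚ (R2 → R2) := Submodule.span ℚ krvGens

/-- The space V_kv of Theorem 1.2. -/
def Vkv : Submodule ℚ R2 :=
  Submodule.span ℚ {F : R2 | ∃ n : ℕ, 3 ≤ n ∧ InLieN n F ∧
    ∃ Fx Fy : R2, F = Fx * X + Fy * Y ∧ Antipal (n-1) Fy ∧ ∃ A : ℚ, PushConst (n-1) (Fy - Fx) A}

/-- y_i = x^{i-1}y. -/
def yi (i : ℕ) : Word := FreeMonoid.ofList (List.replicate (i - 1) 0 ++ [1])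
/-- The word y_{i₁}⋯y_{i_k} associated to a composition (i₁,…,i_k). -/
def wordOfComp (l : List ℕ) : Word := (l.map yi).prod
/-- The stuffle product of two words ending in y, encoded as compositions. -/
def st : List ℕ → List ℕ → R2
  | [], v => mono (wordOfComp v)
  | u, [] => mono (wordOfComp u)
  | i :: u, j :: v =>
      mono (yi i) * st u (j :: v) + mono (yi j) * st (i :: u) v + mono (yi (i + j)) * st u v
termination_by u v => u.length + v.length

/-- Membership in the double shuffle Lie algebra ds. -/
def inDS (f : R2) : Prop :=
  f ∈ LieP ∧ (∀ w ∈ f.coeff.support, 3 ≤ wlen w) ∧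
  ∀ u v : List ℕ, u ≠ [] → v ≠ [] → (∀ i ∈ u, 1 ≤ i) → (∀ i ∈ v, 1 ≤ i) →
    ¬((∀ i ∈ u, i = 1) ∧ (∀ i ∈ v, i = 1)) → pairing f (st u v) = 0
/-- Membership in ds_n = ds ∩ Lie_n[x,y]. -/
def inDSn (n : ℕ) (f : R2) : Prop := inDS f ∧ IsHomog n f

/-- The derivation D_f with x ↦ 0, y ↦ [y,f]. -/
def Dlow (f : R2) : R2 → R2 := derP 0 (Y * f - f * Y)
/-- The Poisson bracket {f,g} = [f,g] + D_f(g) − D_g(f). -/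
def poisson (f g : R2) : R2 := (f * g - g * f) + Dlow f g - Dlow g f

/-- The projection f ↦ f^x, where f = x·f^x + y·f^y (f without constant term). -/
def compL (f : R2) : R2 :=
  MonoidAlgebra.ofCoeff (Finsupp.comapDomain (fun w : Word => FreeMonoid.of 0 * w) f.coeff
    (Set.injOn_of_injective (mul_right_injective (FreeMonoid.of 0))))

/-! Since `∂_x` is a derivation with `∂_x x = 1`, induction gives
`∂_x^(i+1) (x P) = x ∂_x^(i+1) P + (i+1) ∂_x^i P`. Hence the `(i+1)`-st term of `s(xP)` is
`x` times the `(i+1)`-st term of `s(P)` minus the `i`-th term of `s(P)` times `x`, because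
`(-1)^(i+1)/(i+1)! · (i+1) = -(-1)^i/i!`; summing over `i` (all sums are finite since `∂_x`
is locally nilpotent) gives `s(xP) = x s(P) - s(P) x`. -/

open Finset

def dxLinear : R2 →ₗ[ℚ] R2 :=
  (Finsupp.lsum ℚ fun w => LinearMap.toSpanSingleton ℚ R2 (dxW w)).comp
    (MonoidAlgebra.coeffLinearEquiv ℚ).toLinearMap

lemma dx_eq_dxLinear (f : R2) : dx f = dxLinear f := rfl

lemma dx_add (f g : R2) : dx (f + g) = dx f + dx g := map_add dxLinear f g

lemma dx_smul (c : ℚ) (f : R2) : dx (c • f) = c • dx f := map_smul dxLinear c f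

lemma dx_zero : dx 0 = 0 := map_zero dxLinear

lemma dx_single (w : Word) (c : ℚ) : dx (MonoidAlgebra.single w c) = c • dxW w := by
  simp [dx, Finsupp.sum_single_index]

lemma X_mul_single (w : Word) (c : ℚ) :
    X * MonoidAlgebra.single w c = MonoidAlgebra.single (FreeMonoid.of 0 * w) c := by
  rw [X, MonoidAlgebra.of_apply, MonoidAlgebra.single_mul_single, one_mul]

lemma dxW_of_zero_mul (w : Word) : dxW (FreeMonoid.of 0 * w) = mono w + X * dxW w := by
  have hl : FreeMonoid.toList (FreeMonoid.of (0 : Fin 2) * w) = 0 :: FreeMonoid.toList w := rfl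
  have hlen : wlen (FreeMonoid.of 0 * w) = wlen w + 1 := by simp [wlen, hl]
  rw [dxW, hlen, sum_range_succ', add_comm, dxW, mul_sum]
  congr 1
  refine sum_congr rfl fun i _ => ?_
  rw [hl, List.getD_cons_succ, List.eraseIdx_cons_succ, mul_ite, mul_zero, mono, mono,
    X_mul_single]
  rfl

lemma dx_X_mul (f : R2) : dx (X * f) = f + X * dx f := by
  induction f using MonoidAlgebra.induction_linear with
  | zero => simp [dx_zero]
  | add f g hf hg => rw [mul_add, dx_add, hf, hg, dx_add, mul_add]; abel
  | single w c =>
    rw [X_mul_single, dx_single, dx_single, dxW_of_zero_mul, smul_add, mul_smul_comm, mono,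
      MonoidAlgebra.smul_single', mul_one]

lemma iterate_dx_X_mul (f : R2) (i : ℕ) :
    dx^[i + 1] (X * f) = X * dx^[i + 1] f + ((i : ℚ) + 1) • dx^[i] f := by
  induction i with
  | zero => simp [dx_X_mul, add_comm]
  | succ i ih =>
    rw [Function.iterate_succ_apply' dx (i + 1), ih, dx_add, dx_smul, dx_X_mul,
      ← Function.iterate_succ_apply' dx (i + 1), ← Function.iterate_succ_apply' dx i]
    push_cast
    module

def lengthLT (n : ℕ) : Submodule ℚ R2 := Submodule.span ℚ (mono '' {w | wlen w < n})

lemma lengthLT_mono {m n : ℕ} (h : m ≤ n) : lengthLT m ≤ lengthLT n :=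
  Submodule.span_mono <| Set.image_mono fun _ hw => lt_of_lt_of_le hw h

lemma exists_mem_lengthLT (f : R2) : ∃ n, f ∈ lengthLT n := by
  induction f using MonoidAlgebra.induction_linear with
  | zero => exact ⟨0, zero_mem _⟩
  | add f g hf hg =>
    obtain ⟨⟨m, hm⟩, ⟨n, hn⟩⟩ := And.intro hf hg
    exact ⟨max m n, add_mem (lengthLT_mono (le_max_left m n) hm)
      (lengthLT_mono (le_max_right m n) hn)⟩
  | single w c =>
    refine ⟨wlen w + 1, ?_⟩
    rw [← mul_one c, ← MonoidAlgebra.smul_single']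
    exact Submodule.smul_mem _ c (Submodule.subset_span ⟨w, Nat.lt_succ_self _, rfl⟩)

lemma dx_mem_lengthLT {n : ℕ} {f : R2} (hf : f ∈ lengthLT (n + 1)) : dx f ∈ lengthLT n := by
  refine (Submodule.span_le (p := (lengthLT n).comap dxLinear)).mpr ?_ hf
  rintro _ ⟨w, hw, rfl⟩
  rw [SetLike.mem_coe, Submodule.mem_comap, ← dx_eq_dxLinear, mono, dx_single, one_smul, dxW]
  refine sum_mem fun i hi => ?_
  split_ifs
  · refine Submodule.subset_span ⟨_, ?_, rfl⟩
    have hi : i < (FreeMonoid.toList w).length := mem_range.mp hi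
    simp only [Set.mem_ofPred_eq, wlen, FreeMonoid.toList_ofList,
      List.length_eraseIdx_of_lt hi] at hw ⊢
    omega
  · exact zero_mem _

lemma lengthLT_zero : lengthLT 0 = ⊥ := by simp [lengthLT]

lemma exists_iterate_dx_eq_zero (f : R2) : ∃ N, dx^[N] f = 0 := by
  obtain ⟨N, hN⟩ := exists_mem_lengthLT f
  refine ⟨N, ?_⟩
  suffices ∀ n, ∀ g ∈ lengthLT n, dx^[n] g = 0 from this N f hN
  intro n
  induction n with
  | zero => simp [lengthLT_zero]
  | succ n ih => exact fun g hg => ih (dx g) (dx_mem_lengthLT hg)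

lemma iterate_dx_eq_zero_of_le {f : R2} {N i : ℕ} (hN : dx^[N] f = 0) (hi : N ≤ i) :
    dx^[i] f = 0 := by
  rw [← Nat.sub_add_cancel hi, Function.iterate_add_apply, hN,
    Function.iterate_fixed dx_zero]

def sTerm (h : R2) (i : ℕ) : R2 := ((-1 : ℚ) ^ i / (i.factorial : ℚ)) • (dx^[i] h * Y * X ^ i)

lemma sMap_eq_sum_range {h : R2} {N : ℕ} (hN : dx^[N] h = 0) :
    sMap h = ∑ i ∈ range N, sTerm h i := by
  refine finsum_eq_sum_of_support_subset (sTerm h) fun i hi => ?_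
  by_contra hiN
  simp only [coe_range, Set.mem_Iio, not_lt] at hiN
  exact hi (by simp [sTerm, iterate_dx_eq_zero_of_le hN hiN])

lemma sTerm_X_mul_zero (P : R2) : sTerm (X * P) 0 = X * sTerm P 0 := by
  simp [sTerm, mul_assoc]

lemma sTerm_X_mul_succ (P : R2) (i : ℕ) :
    sTerm (X * P) (i + 1) = X * sTerm P (i + 1) - sTerm P i * X := by
  have hcoeff : (-1 : ℚ) ^ (i + 1) / ((i + 1).factorial : ℚ) * ((i : ℚ) + 1)
      = -((-1 : ℚ) ^ i / (i.factorial : ℚ)) := by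
    rw [Nat.factorial_succ]
    push_cast
    field_simp
    ring
  rw [sTerm, sTerm, sTerm, iterate_dx_X_mul, add_mul, add_mul, smul_add, smul_mul_assoc,
    smul_mul_assoc, smul_smul, hcoeff, neg_smul, ← sub_eq_add_neg, pow_succ X i]
  simp only [mul_smul_comm, smul_mul_assoc, mul_assoc]

/-- for every P ∈ ℚ⟨x,y⟩, s(xP) = x·s(P) − s(P)·x = [x, s(P)]. -/
theorem stmt5 (P : R2) :
    sMap (X * P) = X * sMap P - sMap P * X ∧ sMap (X * P) = ⁅X, sMap P⁆ := by
  obtain ⟨N, hN⟩ := exists_iterate_dx_eq_zero P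
  have hN' : dx^[N + 1] P = 0 := iterate_dx_eq_zero_of_le hN N.le_succ
  have hXP : dx^[N + 1] (X * P) = 0 := by
    rw [iterate_dx_X_mul, hN, hN', mul_zero, smul_zero, add_zero]
  have hP : sMap P = ∑ i ∈ range N, sTerm P (i + 1) + sTerm P 0 := by
    rw [sMap_eq_sum_range hN', sum_range_succ']
  have key : sMap (X * P) = X * sMap P - sMap P * X := calc
    sMap (X * P) = ∑ i ∈ range N, sTerm (X * P) (i + 1) + sTerm (X * P) 0 := by
      rw [sMap_eq_sum_range hXP, sum_range_succ']
    _ = X * (∑ i ∈ range N, sTerm P (i + 1) + sTerm P 0) - (∑ i ∈ range N, sTerm P i) * X := by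
      simp only [sTerm_X_mul_succ, sTerm_X_mul_zero, sum_sub_distrib, mul_add, mul_sum, sum_mul]
      abel
    _ = X * sMap P - sMap P * X := by rw [← hP, ← sMap_eq_sum_range hN]
  exact ⟨key, key.trans (Ring.lie_def X (sMap P)).symm⟩

end DblSh
end
end

section
/- Let g ∈ ℚ⟨x,y⟩ be homogeneous of degree n, let φ = a·x + b·y and ψ = c·x + d·y with a,b,c,d ∈ ℚ, and let h = g(φ,ψ) be the image of g under the algebra endomorphism x ↦ φ, y ↦ ψ. If g is antipalindromic, then h is antipalindromic. -/
noncomputable section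
namespace DblSh

attribute [local instance] LieRing.ofAssociativeRing LieAlgebra.ofAssociativeAlgebra

/-! `anti` is an algebra anti-automorphism of ℚ⟨x,y⟩ fixing `x` and `y`, hence fixing every
linear form `a•x + b•y`. So `anti ∘ subst φ ψ` and `subst φ ψ ∘ anti` are algebra homomorphisms
into the opposite algebra that agree on the generators, and therefore coincide; applying
`subst φ ψ` to `g = (−1)^n • anti g` gives the claim. -/

open MulOpposite

lemma antiW_mul (u v : Word) : antiW (u * v) = antiW v * antiW u :=
  FreeMonoid.reverse_mul

lemma anti_single (w : Word) (c : ℚ) :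
    anti (MonoidAlgebra.single w c) = MonoidAlgebra.single (antiW w) c :=
  MonoidAlgebra.mapDomain_single

lemma anti_add (f g : R2) : anti (f + g) = anti f + anti g :=
  MonoidAlgebra.mapDomain_add _ _ _

lemma anti_smul (c : ℚ) (f : R2) : anti (c • f) = c • anti f :=
  MonoidAlgebra.mapDomain_smul _ _ _

lemma anti_mul (f g : R2) : anti (f * g) = anti g * anti f := by
  induction f using MonoidAlgebra.induction_linear with
  | zero => simp [anti, MonoidAlgebra.mapDomain_zero]
  | add p q hp hq => rw [add_mul, anti_add, hp, hq, anti_add, mul_add]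
  | single u a =>
    induction g using MonoidAlgebra.induction_linear with
    | zero => simp [anti, MonoidAlgebra.mapDomain_zero]
    | add p q hp hq => rw [mul_add, anti_add, hp, hq, anti_add, add_mul]
    | single v b =>
      rw [MonoidAlgebra.single_mul_single, anti_single, anti_single, anti_single,
        MonoidAlgebra.single_mul_single, antiW_mul, mul_comm b a]

def antiAlgHom : R2 →ₐ[ℚ] R2ᵐᵒᵖ where
  toFun f := op (anti f)
  map_one' := congrArg op (anti_single 1 1)
  map_mul' f g := congrArg op (anti_mul f g)
  map_zero' := congrArg op (MonoidAlgebra.mapDomain_zero _)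
  map_add' f g := congrArg op (anti_add f g)
  commutes' r := congrArg op (anti_single 1 r)

lemma anti_of (i : Fin 2) :
    anti (MonoidAlgebra.of ℚ Word (FreeMonoid.of i)) = MonoidAlgebra.of ℚ Word (FreeMonoid.of i) :=
  anti_single _ 1

lemma subst_of (φ ψ : R2) (i : Fin 2) :
    subst φ ψ (MonoidAlgebra.of ℚ Word (FreeMonoid.of i)) = if i = 0 then φ else ψ := by
  simp [subst]

lemma anti_subst {φ ψ : R2} (hφ : anti φ = φ) (hψ : anti ψ = ψ) (f : R2) :
    anti (subst φ ψ f) = subst φ ψ (anti f) := by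
  have hom_eq : antiAlgHom.comp (subst φ ψ) = (AlgHom.op (subst φ ψ)).comp antiAlgHom := by
    refine MonoidAlgebra.algHom_ext' (FreeMonoid.hom_eq fun i => ?_) (Subsingleton.elim _ _)
    change op (anti (subst φ ψ _)) = op (subst φ ψ (anti _))
    rw [anti_of, subst_of, apply_ite anti, hφ, hψ]
  exact congrArg unop (AlgHom.congr_fun hom_eq f)

lemma anti_smul_X_add_smul_Y (a b : ℚ) : anti (a • X + b • Y) = a • X + b • Y := by
  rw [anti_add, anti_smul, anti_smul, X, Y, anti_of, anti_of]

theorem stmt8_general (n : ℕ) (g : R2) (a b c d : ℚ)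
    (hanti : Antipal n g) :
    Antipal n (subst (a • X + b • Y) (c • X + d • Y) g) := by
  unfold Antipal at hanti ⊢
  rw [anti_subst (anti_smul_X_add_smul_Y a b) (anti_smul_X_add_smul_Y c d), ← map_smul, ← hanti]

/-- an antipalindromic homogeneous polynomial stays antipalindromic
    under any substitution x ↦ a·x + b·y, y ↦ c·x + d·y. -/
theorem stmt8 (n : ℕ) (g : R2) (hg : IsHomog n g) (a b c d : ℚ)
    (hanti : Antipal n g) :
    Antipal n (subst (a • X + b • Y) (c • X + d • Y) g) :=
  stmt8_general n g a b c d hanti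

end DblSh
end
end

section
/- Let f ∈ Lie_n[x,y] be homogeneous of depth r ≥ 1 (every monomial of f contains exactly r letters y). Then the mould ma_f satisfies mantar(ma_f) = ma_f, i.e. ma_f^r(u_1,…,u_r) = (−1)^{r−1}·ma_f^r(u_r,…,u_1) as polynomials in ℚ[u_1,…,u_r]. -/
noncomputable section
namespace DblSh

attribute [local instance] LieRing.ofAssociativeRing

/-- f is homogeneous of depth r. -/
def IsDepth (r : ℕ) (f : R2) : Prop := ∀ w ∈ f.coeff.support, countY w = r
/-- The x-run lengths (a₀,…,a_r) of a word x^{a₀}y x^{a₁}⋯y x^{a_r}. -/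
def xRuns (w : Word) : List ℕ := ((FreeMonoid.toList w).splitOn 1).map List.length
/-- vimo_f^r(z₀,…,z_r) = Σ_e a_e z₀^{e₀}⋯z_r^{e_r} for f = Σ_e a_e x^{e₀}y⋯y x^{e_r}. -/
def vimo (r : ℕ) (f : R2) : MvPolynomial (Fin (r+1)) ℚ :=
  Finsupp.sum f.coeff (fun w c => c • ∏ j : Fin (r+1), (MvPolynomial.X j) ^ ((xRuns w).getD (j : ℕ) 0))
/-- ma_f^r(u₁,…,u_r) = vimo_f^r(0, u₁, u₁+u₂, …, u₁+⋯+u_r). -/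
def maOf (r : ℕ) (f : R2) : MvPolynomial (Fin r) ℚ :=
  MvPolynomial.aeval
    (fun j : Fin (r+1) =>
      ∑ i ∈ Finset.univ.filter (fun i : Fin r => (i : ℕ) < (j : ℕ)), MvPolynomial.X i)
    (vimo r f)

/-!
Send x to diag(v₀, …, v_r) and y to the (r+1)×(r+1) matrix with ones just above the diagonal.
The word x^{a₀} y ⋯ y x^{a_r} then has corner entry (0, r) equal to v₀^{a₀} ⋯ v_r^{a_r}, so for
v_j = u₁ + ⋯ + u_j the corner entry of the image of f is ma_f, and reversing u₁, …, u_r turns v_j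
into (u₁ + ⋯ + u_r) − v_{r−j}. Two facts about Lie elements f finish the proof. Adding a common
constant to all v_j changes the image of f by a scalar matrix only (commutators kill scalars), so
the off-diagonal corner entry does not move. Replacing v_j by −v_{r−j} turns the image of f into
minus the anti-transpose of the image of f(x, −y) = (−1)^r f, because M ↦ −(anti-transpose of M)
is a Lie algebra map and both sides agree on x and y.
-/
lemma sum_smul_mono (f : R2) : (f.coeff.sum fun w c => c • mono w) = f := by
  conv_rhs => rw [← MonoidAlgebra.sum_coeff_single f]
  simp only [mono, MonoidAlgebra.smul_single', mul_one]

lemma mono_ofList_cons (a : Fin 2) (t : List (Fin 2)) :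
    mono (FreeMonoid.ofList (a :: t)) = mono (FreeMonoid.of a) * mono (FreeMonoid.ofList t) := by
  simp [mono, MonoidAlgebra.single_mul_single]

lemma mono_of_zero : mono (FreeMonoid.of 0) = X :=
  rfl

lemma mono_of_one : mono (FreeMonoid.of 1) = Y :=
  rfl

section LiftXY
variable {B : Type*} [Semiring B] [Algebra ℚ B]

def liftXY (a b : B) : R2 →ₐ[ℚ] B :=
  MonoidAlgebra.lift ℚ B Word (FreeMonoid.lift (fun i : Fin 2 => if i = 0 then a else b))

@[simp]
lemma liftXY_X (a b : B) : liftXY a b X = a := by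
  simp [liftXY, X]

@[simp]
lemma liftXY_Y (a b : B) : liftXY a b Y = b := by
  simp [liftXY, Y]

lemma algHom_ext_XY {φ ψ : R2 →ₐ[ℚ] B} (hX : φ X = ψ X) (hY : φ Y = ψ Y) : φ = ψ :=
  (MonoidAlgebra.lift ℚ B Word).symm.injective <| FreeMonoid.hom_eq fun i => by
    fin_cases i
    exacts [hX, hY]

lemma algHom_apply_eq_sum (φ : R2 →ₐ[ℚ] B) (f : R2) :
    φ f = f.coeff.sum fun w c => c • φ (mono w) := by
  conv_lhs => rw [← sum_smul_mono f]
  simp only [map_finsuppSum, map_smul]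

end LiftXY

section LieClosure
variable {B : Type*} [Ring B] [Algebra ℚ B] {φ ψ : R2 →ₐ[ℚ] B}

lemma sub_mem_center_of_mem_lieP (hX : φ X - ψ X ∈ Subalgebra.center ℚ B)
    (hY : φ Y - ψ Y ∈ Subalgebra.center ℚ B) {f : R2} (hf : f ∈ LieP) :
    φ f - ψ f ∈ Subalgebra.center ℚ B := by
  induction hf using LieSubalgebra.lieSpan_induction with
  | mem x hx =>
    rcases hx with rfl | rfl
    exacts [hX, hY]
  | zero => simp
  | add a b _ _ ha hb => simpa [add_sub_add_comm] using add_mem ha hb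
  | smul c a _ ha => simpa [smul_sub] using Subalgebra.smul_mem _ ha c
  | lie a b _ _ ha hb =>
    obtain ⟨s, hs, hφa⟩ : ∃ s ∈ Subalgebra.center ℚ B, φ a = ψ a + s :=
      ⟨_, ha, (add_sub_cancel _ _).symm⟩
    obtain ⟨t, ht, hφb⟩ : ∃ t ∈ Subalgebra.center ℚ B, φ b = ψ b + t :=
      ⟨_, hb, (add_sub_cancel _ _).symm⟩
    rw [Subalgebra.mem_center_iff] at hs ht
    have hcomm : φ ⁅a, b⁆ - ψ ⁅a, b⁆ =
        (ψ a * t - t * ψ a) + (s * ψ b - ψ b * s) + (s * t - t * s) := by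
      simp only [Ring.lie_def, map_sub, map_mul, hφa, hφb]
      noncomm_ring
    rw [hcomm, hs, ht (ψ a), ht s]
    simp

lemma eq_neg_anti_of_mem_lieP (γ : B →ₗ[ℚ] B) (hγ : ∀ a b, γ (a * b) = γ b * γ a)
    (hX : φ X = -γ (ψ X)) (hY : φ Y = -γ (ψ Y)) {f : R2} (hf : f ∈ LieP) :
    φ f = -γ (ψ f) := by
  induction hf using LieSubalgebra.lieSpan_induction with
  | mem x hx =>
    rcases hx with rfl | rfl
    exacts [hX, hY]
  | zero => simp
  | add a b _ _ ha hb => simp [ha, hb, add_comm]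
  | smul c a _ ha => simp [ha]
  | lie a b _ _ ha hb =>
    simp only [Ring.lie_def, map_sub, map_mul, hγ, ha, hb]
    noncomm_ring

end LieClosure

lemma xRuns_ofList_cons_one (t : List (Fin 2)) :
    xRuns (FreeMonoid.ofList (1 :: t)) = 0 :: xRuns (FreeMonoid.ofList t) := by
  simp [xRuns, List.splitOn, List.splitOnP_cons_eq_if_modifyHead]

lemma xRuns_ofList_cons_zero_getD (t : List (Fin 2)) (j : ℕ) :
    (xRuns (FreeMonoid.ofList (0 :: t))).getD j 0 =
      (xRuns (FreeMonoid.ofList t)).getD j 0 + if j = 0 then 1 else 0 := by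
  obtain ⟨p, ps, hsplit⟩ : ∃ p ps, t.splitOn 1 = p :: ps :=
    List.exists_cons_of_ne_nil (List.splitOnP_ne_nil _ t)
  have hcons : (0 :: t : List (Fin 2)).splitOn 1 = (0 :: p) :: ps := by
    simp only [List.splitOn] at hsplit ⊢
    simp [List.splitOnP_cons_eq_if_modifyHead, hsplit]
  rcases j with _ | j <;> simp [xRuns, hcons, hsplit]

section DiagShift
variable {A : Type*} [CommRing A]

def shiftMat (m : ℕ) : Matrix (Fin (m + 1)) (Fin (m + 1)) A :=
  Matrix.of fun i j => if (j : ℕ) = i + 1 then 1 else 0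

lemma shiftMat_mul_apply {m : ℕ} (M : Matrix (Fin (m + 1)) (Fin (m + 1)) A) (p q : Fin (m + 1))
    (hp : (p : ℕ) + 1 ≤ m) :
    (shiftMat m * M : Matrix (Fin (m + 1)) (Fin (m + 1)) A) p q = M ⟨p + 1, by omega⟩ q := by
  rw [Matrix.mul_apply, Finset.sum_eq_single ⟨p + 1, by omega⟩]
  · simp [shiftMat]
  · intro k _ hk
    simp [shiftMat, show (k : ℕ) ≠ p + 1 from fun h => hk (Fin.ext h)]
  · simp

variable [Algebra ℚ A] (m : ℕ)

def diagShiftRep (v : ℕ → A) : R2 →ₐ[ℚ] Matrix (Fin (m + 1)) (Fin (m + 1)) A :=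
  liftXY (Matrix.diagonal fun j : Fin (m + 1) => v j) (shiftMat m)

@[simp]
lemma diagShiftRep_X (v : ℕ → A) :
    diagShiftRep m v X = Matrix.diagonal fun j : Fin (m + 1) => v j :=
  liftXY_X _ _

@[simp]
lemma diagShiftRep_Y (v : ℕ → A) : diagShiftRep m v Y = shiftMat m :=
  liftXY_Y _ _

variable {m}

lemma diagShiftRep_mono_apply (v : ℕ → A) (l : List (Fin 2)) (p q : Fin (m + 1))
    (hq : (q : ℕ) = p + l.count 1) :
    diagShiftRep m v (mono (FreeMonoid.ofList l)) p q =
      ∏ j ∈ Finset.range (l.count 1 + 1), v (p + j) ^ (xRuns (FreeMonoid.ofList l)).getD j 0 := by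
  induction l generalizing p with
  | nil =>
    obtain rfl : q = p := Fin.ext (by simpa using hq)
    simp [xRuns, mono, ← MonoidAlgebra.one_def]
  | cons a t ih =>
    rw [mono_ofList_cons, map_mul]
    match a with
    | 0 =>
      rw [List.count_cons_of_ne (by decide)] at hq ⊢
      rw [mono_of_zero, diagShiftRep_X, Matrix.diagonal_mul,
        ih p hq, Finset.prod_range_succ', Finset.prod_range_succ']
      simp only [xRuns_ofList_cons_zero_getD, if_pos, add_zero, pow_add, pow_one,
        Nat.add_one_ne_zero, if_false]
      ring
    | 1 =>
      rw [List.count_cons_self] at hq ⊢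
      have hp : (p : ℕ) + 1 ≤ m := by omega
      rw [mono_of_one, diagShiftRep_Y, shiftMat_mul_apply _ _ _ hp,
        ih _ (by show (q : ℕ) = p + 1 + t.count 1; omega),
        Finset.prod_range_succ' _ (t.count 1 + 1), xRuns_ofList_cons_one]
      simp [add_assoc, add_comm 1]

def antiTranspose :
    Matrix (Fin (m + 1)) (Fin (m + 1)) A →ₗ[ℚ] Matrix (Fin (m + 1)) (Fin (m + 1)) A where
  toFun M := Matrix.of fun i j => M j.rev i.rev
  map_add' _ _ := rfl
  map_smul' _ _ := rfl

lemma antiTranspose_apply (M : Matrix (Fin (m + 1)) (Fin (m + 1)) A) (i j : Fin (m + 1)) :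
    antiTranspose M i j = M j.rev i.rev :=
  rfl

lemma antiTranspose_mul (M N : Matrix (Fin (m + 1)) (Fin (m + 1)) A) :
    antiTranspose (M * N) = antiTranspose N * antiTranspose M := by
  ext i j
  simp only [antiTranspose_apply, Matrix.mul_apply]
  rw [← Equiv.sum_comp Fin.revPerm]
  simp [mul_comm]

lemma antiTranspose_diagonal (v : ℕ → A) :
    antiTranspose (Matrix.diagonal fun j : Fin (m + 1) => v j) =
      Matrix.diagonal fun j : Fin (m + 1) => v (m - j) := by
  ext i j
  by_cases h : i = j
  · subst h
    simp [antiTranspose_apply]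
  · simp [antiTranspose_apply, Matrix.diagonal_apply_ne _ h, Ne.symm h]

lemma antiTranspose_shiftMat : antiTranspose (shiftMat m : Matrix (Fin (m + 1)) (Fin (m + 1)) A) =
    shiftMat m := by
  ext i j
  simp only [antiTranspose_apply, shiftMat, Matrix.of_apply, Fin.val_rev]
  congr 1
  apply propext
  omega

lemma diagShiftRep_neg_rev (v : ℕ → A) {f : R2} (hf : f ∈ LieP) :
    diagShiftRep m (fun j => -v (m - j)) f =
      -antiTranspose (diagShiftRep m v (liftXY X (-Y) f)) :=
  eq_neg_anti_of_mem_lieP (ψ := (diagShiftRep m v).comp (liftXY X (-Y))) antiTranspose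
    antiTranspose_mul
    (by simp [antiTranspose_diagonal, Matrix.diagonal_neg])
    (by simp [antiTranspose_shiftMat]) hf

lemma diagShiftRep_add_const_apply_of_ne (v : ℕ → A) (c : A) {f : R2} (hf : f ∈ LieP)
    {i j : Fin (m + 1)} (hij : i ≠ j) :
    diagShiftRep m (fun k => v k + c) f i j = diagShiftRep m v f i j := by
  have hscalar : diagShiftRep m (fun k => v k + c) X - diagShiftRep m v X ∈
      Subalgebra.center ℚ (Matrix (Fin (m + 1)) (Fin (m + 1)) A) := by
    show _ ∈ Set.center _
    rw [Matrix.center_eq_range]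
    exact ⟨c, by ext i j; by_cases h : i = j <;> simp [h]⟩
  have hcentral : diagShiftRep m (fun k => v k + c) f - diagShiftRep m v f ∈
      Set.center (Matrix (Fin (m + 1)) (Fin (m + 1)) A) :=
    sub_mem_center_of_mem_lieP hscalar (by simp) hf
  rw [Matrix.center_eq_range] at hcentral
  obtain ⟨a, ha⟩ := hcentral
  rw [← sub_eq_zero, ← Matrix.sub_apply, ← ha, Matrix.scalar_apply,
    Matrix.diagonal_apply_ne _ hij]

lemma map_diagShiftRep_apply {A' : Type*} [CommRing A'] [Algebra ℚ A'] (φ : A →ₐ[ℚ] A')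
    (v : ℕ → A) (f : R2) (i j : Fin (m + 1)) :
    φ (diagShiftRep m v f i j) = diagShiftRep m (fun k => φ (v k)) f i j := by
  have hcomp : φ.mapMatrix.comp (diagShiftRep m v) = diagShiftRep m fun k => φ (v k) :=
    algHom_ext_XY (by simp [Matrix.diagonal_map]) (by ext; simp [shiftMat, apply_ite φ])
  rw [← hcomp]
  rfl

end DiagShift

lemma liftXY_smul_Y_mono (c : ℚ) (l : List (Fin 2)) :
    liftXY X (c • Y) (mono (FreeMonoid.ofList l)) = c ^ l.count 1 • mono (FreeMonoid.ofList l) := by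
  induction l with
  | nil => simp [mono, ← MonoidAlgebra.one_def]
  | cons a t ih =>
    rw [mono_ofList_cons, map_mul, ih, mul_smul_comm]
    match a with
    | 0 => rw [mono_of_zero, liftXY_X, List.count_cons_of_ne (by decide)]
    | 1 =>
      rw [mono_of_one, liftXY_Y, List.count_cons_self, smul_mul_assoc, smul_smul, pow_succ]

lemma liftXY_smul_Y_of_isDepth (c : ℚ) {r : ℕ} {f : R2} (hf : IsDepth r f) :
    liftXY X (c • Y) f = c ^ r • f := by
  conv_rhs => rw [← sum_smul_mono f]
  rw [algHom_apply_eq_sum, Finsupp.smul_sum]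
  refine Finsupp.sum_congr fun w hw => ?_
  rw [smul_comm, ← hf w hw]
  exact congrArg _ (liftXY_smul_Y_mono c w.toList)

def prefixSum (r k : ℕ) : MvPolynomial (Fin r) ℚ :=
  ∑ i ∈ Finset.univ.filter (fun i : Fin r => (i : ℕ) < k), MvPolynomial.X i

lemma rename_rev_prefixSum (r k : ℕ) :
    MvPolynomial.rename Fin.rev (prefixSum r k) = prefixSum r r - prefixSum r (r - k) := by
  have hrev : MvPolynomial.rename Fin.rev (prefixSum r k) =
      ∑ i ∈ Finset.univ.filter (fun i : Fin r => ¬ (i : ℕ) < r - k), MvPolynomial.X i := by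
    rw [prefixSum, map_sum]
    refine Finset.sum_nbij' Fin.rev Fin.rev ?_ ?_ (by simp) (by simp) (by simp)
    all_goals
      intro i hi
      simp only [Finset.mem_filter, Finset.mem_univ, true_and, Fin.val_rev] at hi ⊢
      omega
  have htotal : prefixSum r r = ∑ i, MvPolynomial.X i := by
    rw [prefixSum, Finset.filter_true_of_mem fun i _ => i.isLt]
  rw [hrev, htotal, ← Finset.sum_filter_add_sum_filter_not Finset.univ
    (fun i : Fin r => (i : ℕ) < r - k), prefixSum, add_sub_cancel_left]

lemma maOf_eq_diagShiftRep_apply {r : ℕ} {f : R2} (hf : IsDepth r f) :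
    maOf r f = diagShiftRep r (prefixSum r) f 0 (Fin.last r) := by
  rw [maOf, vimo, map_finsuppSum, algHom_apply_eq_sum, Finsupp.sum, Finsupp.sum, Matrix.sum_apply]
  refine Finset.sum_congr rfl fun w hw => ?_
  have hmono := diagShiftRep_mono_apply (prefixSum r) w.toList 0 (Fin.last r)
    (by simp only [Fin.val_last, Fin.val_zero, zero_add]; exact (hf w hw).symm)
  rw [FreeMonoid.ofList_toList] at hmono
  rw [Matrix.smul_apply, map_smul, map_prod, hmono]
  simp only [map_pow, MvPolynomial.aeval_X, Fin.val_zero, zero_add]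
  rw [← hf w hw, ← Fin.prod_univ_eq_prod_range]
  rfl

theorem stmt15_general (r : ℕ) (hr : 1 ≤ r) (f : R2)
    (hf : f ∈ LieP) (hdepth : IsDepth r f) :
    maOf r f = ((-1 : ℚ))^(r-1) • MvPolynomial.rename Fin.rev (maOf r f) := by
  have hcorner : (0 : Fin (r + 1)) ≠ Fin.last r := by
    rw [Ne, Fin.ext_iff, Fin.val_zero, Fin.val_last]
    omega
  have hreverse : MvPolynomial.rename Fin.rev (maOf r f) = -((-1 : ℚ) ^ r • maOf r f) :=
    calc MvPolynomial.rename Fin.rev (maOf r f)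
        = diagShiftRep r (fun k => -prefixSum r (r - k) + prefixSum r r) f 0 (Fin.last r) := by
          rw [maOf_eq_diagShiftRep_apply hdepth, map_diagShiftRep_apply]
          simp_rw [rename_rev_prefixSum, sub_eq_neg_add]
      _ = diagShiftRep r (fun k => -prefixSum r (r - k)) f 0 (Fin.last r) :=
          diagShiftRep_add_const_apply_of_ne _ _ hf hcorner
      _ = -((-1 : ℚ) ^ r • maOf r f) := by
          rw [diagShiftRep_neg_rev _ hf, ← neg_one_smul ℚ Y, liftXY_smul_Y_of_isDepth _ hdepth,
            maOf_eq_diagShiftRep_apply hdepth, Matrix.neg_apply, antiTranspose_apply, map_smul,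
            Fin.rev_last, Fin.rev_zero, Matrix.smul_apply]
  rw [hreverse, smul_neg, smul_smul, ← pow_add, show r - 1 + r = 2 * (r - 1) + 1 by omega,
    pow_succ, pow_mul]
  simp

/-- Lemma A.2: if f ∈ Lie_n[x,y] is homogeneous of depth r ≥ 1,
    then mantar(ma_f) = ma_f, i.e. ma_f^r(u₁,…,u_r) = (−1)^{r−1}·ma_f^r(u_r,…,u₁). -/
theorem stmt15 (n r : ℕ) (hr : 1 ≤ r) (f : R2)
    (hf : f ∈ LieP) (hhom : IsHomog n f) (hdepth : IsDepth r f) :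
    maOf r f = ((-1 : ℚ))^(r-1) • MvPolynomial.rename Fin.rev (maOf r f) :=
  stmt15_general r hr f hf hdepth

end DblSh
end
end
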